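/- Assume H1 and H2 hold. Define m(z) = 2∫_z^∞ e^{γ(y)} ∫_y^∞ e^{-γ(ξ)} dξ dy and M(z) = ∫_z^∞ 1/q(y) dy (finite for large z). Then lim_{z→∞} m(z)/M(z) = 1. -/

import Mathlib

/-!
Write `p = γ' = 2q` and `F(z) = ∫_z^∞ e^{-γ}`. Since `p → ∞`, `γ` grows at least linearly,
so `F` is finite. The function `e^{-γ}/p` has derivative `-e^{-γ} (1 + p'/p²)`, whose ratio with
`F' = -e^{-γ}` tends to `1` by H2; by L'Hôpital `p e^{γ} F → 1`, i.e. `1/q ~ 2 e^{γ} F`.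
By H1 the right-hand side is integrable at infinity, hence so is `1/q`, and L'Hôpital applied
to the tails `m(z)` and `M(z)`, whose derivatives are `-2 e^{γ} F` and `-1/q`, gives `m/M → 1`.
-/

open MeasureTheory Real Filter Set Topology Asymptotics

section TailIntegral

variable {E : Type*} [NormedAddCommGroup E] [NormedSpace ℝ E] [CompleteSpace E] {f : ℝ → E}

theorem hasDerivAt_integral_Ioi {a z : ℝ} (hf : IntegrableOn f (Ioi a))
    (hfc : ContinuousOn f (Ioi a)) (hz : a < z) :
    HasDerivAt (fun u => ∫ x in Ioi u, f x) (-f z) z := by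
  have hF : (fun u => ∫ x in Ioi u, f x) =ᶠ[𝓝 z]
      fun u => (∫ x in Ioi a, f x) - ∫ x in a..u, f x := by
    filter_upwards [Ioi_mem_nhds hz] with u hu
    rw [← intervalIntegral.integral_Ioi_sub_Ioi hf hu.le, sub_sub_cancel]
  have hint : IntervalIntegrable f volume a z :=
    (intervalIntegrable_iff_integrableOn_Ioc_of_le hz.le).2 (hf.mono_set Ioc_subset_Ioi_self)
  have hFTC := intervalIntegral.integral_hasDerivAt_right hint
    (hfc.stronglyMeasurableAtFilter isOpen_Ioi z hz) (hfc.continuousAt (Ioi_mem_nhds hz))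
  exact (hFTC.const_sub _).congr_of_eventuallyEq hF

theorem continuous_integral_Ioi (hf : ∀ a, IntegrableOn f (Ioi a)) (hfc : Continuous f) :
    Continuous fun u => ∫ x in Ioi u, f x :=
  continuous_iff_continuousAt.2 fun z =>
    (hasDerivAt_integral_Ioi (hf (z - 1)) hfc.continuousOn (sub_one_lt z)).continuousAt

theorem MeasureTheory.IntegrableAtFilter.eventually_hasDerivAt_integral_Ioi
    (hf : IntegrableAtFilter f atTop) (hfc : ∀ᶠ x in atTop, ContinuousAt f x) :
    ∀ᶠ x in atTop, HasDerivAt (fun u => ∫ t in Ioi u, f t) (-f x) x := by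
  obtain ⟨s, hs, hfs⟩ := hf
  obtain ⟨a, ha⟩ := mem_atTop_sets.1 (inter_mem hs hfc)
  filter_upwards [eventually_gt_atTop a] with x hx
  exact hasDerivAt_integral_Ioi (hfs.mono_set fun y hy => (ha y hy.le).1)
    (fun y hy => (ha y hy.le).2.continuousWithinAt) hx

end TailIntegral

theorem tendsto_integral_Ioi_div_integral_Ioi {f g : ℝ → ℝ} {l : ℝ}
    (hf : IntegrableAtFilter f atTop) (hg : IntegrableAtFilter g atTop)
    (hfc : ∀ᶠ x in atTop, ContinuousAt f x) (hgc : ∀ᶠ x in atTop, ContinuousAt g x)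
    (hg0 : ∀ᶠ x in atTop, g x ≠ 0) (hfg : Tendsto (fun x => f x / g x) atTop (𝓝 l)) :
    Tendsto (fun z => (∫ x in Ioi z, f x) / ∫ x in Ioi z, g x) atTop (𝓝 l) :=
  HasDerivAt.lhopital_zero_atTop (f' := fun x => -f x) (hf.eventually_hasDerivAt_integral_Ioi hfc)
    (hg.eventually_hasDerivAt_integral_Ioi hgc) (hg0.mono fun _ => neg_ne_zero.2)
    (tendsto_integral_Ioi_zero tendsto_id) (tendsto_integral_Ioi_zero tendsto_id)
    (by simpa only [neg_div_neg_eq] using hfg)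

theorem integrableOn_mul_integral_Ioi_of_lintegral_lt_top {f g : ℝ → ℝ} {s : Set ℝ}
    (hm : AEStronglyMeasurable (fun y => f y * ∫ z in Ioi y, g z) (volume.restrict s))
    (hf : ∀ y, 0 ≤ f y) (hg : ∀ z, 0 ≤ g z)
    (H : ∫⁻ y in s, ENNReal.ofReal (f y) * ∫⁻ z in Ioi y, ENNReal.ofReal (g z) < ⊤) :
    IntegrableOn (fun y => f y * ∫ z in Ioi y, g z) s := by
  refine ⟨hm, lt_of_le_of_lt (lintegral_mono fun y => ?_) H⟩
  rw [enorm_mul, Real.enorm_of_nonneg (hf y)]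
  gcongr
  calc ‖∫ z in Ioi y, g z‖ₑ
      ≤ ∫⁻ z in Ioi y, ‖g z‖ₑ := enorm_integral_le_lintegral_enorm _
    _ = ∫⁻ z in Ioi y, ENNReal.ofReal (g z) :=
      lintegral_congr fun z => Real.enorm_of_nonneg (hg z)

section ExpNegTail

variable {γ p : ℝ → ℝ}

theorem isBigO_exp_neg_of_one_le_deriv (hγ : ∀ x, HasDerivAt γ (p x) x)
    (hp : ∀ᶠ x in atTop, 1 ≤ p x) :
    (fun x => exp (-γ x)) =O[atTop] fun x => exp (-x) := by
  obtain ⟨A, hA⟩ := eventually_atTop.1 hp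
  have hγd : Differentiable ℝ γ := fun x => (hγ x).differentiableAt
  have hgrowth : ∀ x, A ≤ x → 1 * (x - A) ≤ γ x - γ A := fun x hx =>
    (convex_Ici A).mul_sub_le_image_sub_of_le_deriv hγd.continuous.continuousOn
      hγd.differentiableOn (fun y hy => (hγ y).deriv ▸ hA y (interior_Ici (a := A) ▸ hy).le)
      A self_mem_Ici x hx hx
  refine IsBigO.of_bound (exp (A - γ A)) ?_
  filter_upwards [eventually_ge_atTop A] with x hx
  rw [norm_of_nonneg (exp_pos _).le, norm_of_nonneg (exp_pos _).le, ← exp_add]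
  exact exp_le_exp.2 (by linarith [hgrowth x hx])

theorem integrableOn_exp_neg_Ioi_of_one_le_deriv (hγ : ∀ x, HasDerivAt γ (p x) x)
    (hp : ∀ᶠ x in atTop, 1 ≤ p x) (b : ℝ) :
    IntegrableOn (fun x => exp (-γ x)) (Ioi b) := by
  have hc : Continuous fun x => exp (-γ x) :=
    (continuous_iff_continuousAt.2 fun x => (hγ x).continuousAt).neg.rexp
  have hexp : IntegrableAtFilter (fun x => exp (-x)) atTop :=
    ⟨Ioi 0, Ioi_mem_atTop 0, by simpa using exp_neg_integrableOn_Ioi 0 one_pos⟩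
  exact (hc.locallyIntegrable.locallyIntegrableOn _ |>.integrableOn_of_isBigO_atTop
    (isBigO_exp_neg_of_one_le_deriv hγ hp) hexp).mono_set Ioi_subset_Ici_self

theorem tendsto_mul_exp_mul_integral_Ioi_exp_neg (hγ : ∀ x, HasDerivAt γ (p x) x)
    (hp : Differentiable ℝ p) (hp_top : Tendsto p atTop atTop)
    (hp' : Tendsto (fun x => deriv p x / p x ^ 2) atTop (𝓝 0)) :
    Tendsto (fun z => p z * exp (γ z) * ∫ x in Ioi z, exp (-γ x)) atTop (𝓝 1) := by
  have hp1 := hp_top.eventually_ge_atTop 1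
  have hw := integrableOn_exp_neg_Ioi_of_one_le_deriv hγ hp1
  have hwc : Continuous fun x => exp (-γ x) :=
    (continuous_iff_continuousAt.2 fun x => (hγ x).continuousAt).neg.rexp
  have hF : ∀ z, HasDerivAt (fun z => ∫ x in Ioi z, exp (-γ x)) (-exp (-γ z)) z := fun z =>
    hasDerivAt_integral_Ioi (hw (z - 1)) hwc.continuousOn (by linarith)
  have hφ : ∀ᶠ z in atTop, HasDerivAt (fun z => exp (-γ z) / p z)
      (-exp (-γ z) * (1 + deriv p z / p z ^ 2)) z := by
    filter_upwards [hp1] with z hz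
    have hpz : p z ≠ 0 := by positivity
    refine (((hγ z).neg.exp).div (hp z).hasDerivAt hpz).congr_deriv ?_
    simp only [Pi.neg_apply]
    field_simp
    ring
  have hφ_zero : Tendsto (fun z => exp (-γ z) / p z) atTop (𝓝 0) := by
    simpa [div_eq_mul_inv] using ((isBigO_exp_neg_of_one_le_deriv hγ hp1).trans_tendsto
      (tendsto_exp_atBot.comp tendsto_neg_atTop_atBot)).mul hp_top.inv_tendsto_atTop
  have hr : Tendsto (fun z => 1 + deriv p z / p z ^ 2) atTop (𝓝 1) := by
    simpa using tendsto_const_nhds.add hp'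
  have hdiv : Tendsto (fun z => -exp (-γ z) / (-exp (-γ z) * (1 + deriv p z / p z ^ 2)))
      atTop (𝓝 1) := by
    have hinv := hr.inv₀ one_ne_zero
    rw [inv_one] at hinv
    refine hinv.congr fun z => ?_
    rw [neg_mul, neg_div_neg_eq, div_mul_cancel_left₀ (exp_pos _).ne']
  have hφ' : ∀ᶠ z in atTop, -exp (-γ z) * (1 + deriv p z / p z ^ 2) ≠ 0 :=
    (hr.eventually_ne one_ne_zero).mono fun z hz =>
      mul_ne_zero (neg_ne_zero.2 (exp_pos _).ne') hz
  have hlim := HasDerivAt.lhopital_zero_atTop (Eventually.of_forall hF) hφ hφ'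
    (tendsto_integral_Ioi_zero tendsto_id) hφ_zero hdiv
  refine hlim.congr fun z => ?_
  rw [div_div_eq_mul_div, exp_neg, div_inv_eq_mul]
  ring

end ExpNegTail

/-- Under H1 and H2, with m(z) = 2∫_z^∞ e^{γ(y)} ∫_y^∞ e^{-γ(ξ)} dξ dy and
M(z) = ∫_z^∞ 1/q, one has m(z)/M(z) → 1. -/
theorem m_div_M_tendsto_one
    (q γ : ℝ → ℝ)
    (hq : ContDiff ℝ 1 q)
    (hγ : ∀ y, γ y = 2 * ∫ t in (0:ℝ)..y, q t)
    (H1 : ∫⁻ y in Set.Ioi (0:ℝ),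
        ENNReal.ofReal (Real.exp (γ y)) *
          ∫⁻ z in Set.Ioi y, ENNReal.ofReal (Real.exp (-(γ z))) < ⊤)
    (H2a : Tendsto q atTop atTop)
    (H2b : Tendsto (fun x => deriv q x / q x ^ 2) atTop (nhds 0)) :
    Tendsto
      (fun z =>
        (2 * ∫ y in Set.Ioi z, Real.exp (γ y) * ∫ ξ in Set.Ioi y, Real.exp (-(γ ξ))) /
          ∫ x in Set.Ioi z, 1 / q x)
      atTop (nhds 1) := by
  have hqd : Differentiable ℝ q := hq.differentiable one_ne_zero
  have hγd : ∀ x, HasDerivAt γ (2 * q x) x := fun x =>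
    funext hγ ▸ (hqd.continuous.integral_hasStrictDerivAt 0 x).hasDerivAt.const_mul 2
  have hγc : Continuous γ := continuous_iff_continuousAt.2 fun x => (hγd x).continuousAt
  have hp_top : Tendsto (fun x => 2 * q x) atTop atTop := H2a.const_mul_atTop two_pos
  set F : ℝ → ℝ := fun y => ∫ ξ in Ioi y, exp (-γ ξ)
  have hFc : Continuous F := continuous_integral_Ioi
    (integrableOn_exp_neg_Ioi_of_one_le_deriv hγd (hp_top.eventually_ge_atTop 1)) hγc.neg.rexp
  have hkey : Tendsto (fun z => 2 * q z * exp (γ z) * F z) atTop (𝓝 1) := by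
    refine tendsto_mul_exp_mul_integral_Ioi_exp_neg hγd (hqd.const_mul 2) hp_top ?_
    have h := H2b.const_mul (1 / 2)
    rw [mul_zero] at h
    refine h.congr fun x => ?_
    rw [deriv_const_mul _ (hqd x)]
    ring
  have hm : IntegrableOn (fun y => 2 * (exp (γ y) * F y)) (Ioi 0) :=
    (integrableOn_mul_integral_Ioi_of_lintegral_lt_top (hγc.rexp.mul hFc).aestronglyMeasurable
      (fun _ => (exp_pos _).le) (fun _ => (exp_pos _).le) H1).const_mul 2
  have hratio : Tendsto (fun x => 2 * (exp (γ x) * F x) / (1 / q x)) atTop (𝓝 1) :=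
    hkey.congr fun x => by rw [div_div_eq_mul_div, div_one]; ring
  have hq0 := H2a.eventually_gt_atTop 0
  have hM : IntegrableAtFilter (fun x => 1 / q x) atTop :=
    (isEquivalent_of_tendsto_one hratio).symm.isBigO.integrableAtFilter
      (hqd.continuous.measurable.const_div 1).aestronglyMeasurable.stronglyMeasurableAtFilter
      ⟨Ioi 0, Ioi_mem_atTop 0, hm⟩
  refine (tendsto_integral_Ioi_div_integral_Ioi ⟨Ioi 0, Ioi_mem_atTop 0, hm⟩ hM
    (Eventually.of_forall fun x => by fun_prop)
    (hq0.mono fun x hx => continuousAt_const.div hqd.continuous.continuousAt hx.ne')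
    (hq0.mono fun x hx => one_div_ne_zero hx.ne') hratio).congr fun z => ?_
  rw [integral_const_mul]
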